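/- Let T ∈ (0, ∞] and let u : cl(B₁) × [0,T) → ℝ be continuous, such that ∂ₜu and the spatial second derivatives of u exist and are continuous on B₁ × [0,T), and ∂ₜu(x,t) = e^{−2u(x,t)}Δu(x,t) − 1 holds for all x ∈ B₁, t ∈ [0,T). Let u_LN(x) = log(2/(1−‖x‖²)). Then for every t ∈ [0,T) and x ∈ B₁, u(x,t) − u_LN(x) ≤ max{ sup_{y ∈ B₁}(u(y,0) − u_LN(y)), 0 }. Moreover, if T = ∞ then limsup_{t → ∞} sup_{x ∈ B₁}(u(x,t) − u_LN(x)) ≤ 0. -/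

import Mathlib

open Real Set Filter MeasureTheory
open scoped Topology RealInnerProductSpace

noncomputable section

/-- The Euclidean plane. -/
abbrev E2 : Type := EuclideanSpace ℝ (Fin 2)

/-- The Euclidean Laplacian: the sum of the two second partial derivatives. -/
noncomputable def lap (u : E2 → ℝ) (x : E2) : ℝ :=
  ∑ i : Fin 2, fderiv ℝ (fun y => fderiv ℝ u y (EuclideanSpace.single i 1)) x
    (EuclideanSpace.single i 1)

/-- The time interval `[0, T)` for `T ∈ (0, ∞]`. -/
def Itv (T : EReal) : Set ℝ := {t : ℝ | 0 ≤ t ∧ (t : EReal) < T}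

/-- The Loewner-Nirenberg solution on the unit disk: the conformal factor of the
complete hyperbolic metric. -/
noncomputable def uLN (x : E2) : ℝ := Real.log (2 / (1 - ‖x‖ ^ 2))

lemma oneD {h φ : ℝ → ℝ} {δ A : ℝ} (hδ : 0 < δ)
    (hcont : ContinuousOn h (Set.Icc (-δ) δ))
    (hmax : ∀ s ∈ Set.Icc (-δ) δ, h s ≤ h 0)
    (hderiv : ∀ s, s ≠ 0 → |s| < δ → HasDerivAt h (φ s) s)
    (hφ : HasDerivAt φ A 0) : A ≤ 0 := by
  -- auxiliary: positivity of φ on a right interval is impossible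
  have sub1 : ∀ δ'' : ℝ, 0 < δ'' → δ'' ≤ δ → (∀ s ∈ Set.Ioo (0:ℝ) δ'', 0 < φ s) → False := by
    intro δ'' h0 hle hpos
    have hsub : Set.Icc (0:ℝ) δ'' ⊆ Set.Icc (-δ) δ := by
      apply Set.Icc_subset_Icc <;> linarith
    have hmono : StrictMonoOn h (Set.Icc (0:ℝ) δ'') := by
      apply strictMonoOn_of_deriv_pos (convex_Icc _ _) (hcont.mono hsub)
      intro s hs
      rw [interior_Icc] at hs
      have hd : HasDerivAt h (φ s) s := hderiv s (ne_of_gt hs.1) (by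
        rw [abs_of_pos hs.1]; linarith [hs.2])
      rw [hd.deriv]; exact hpos s hs
    have : h 0 < h δ'' := hmono (by constructor <;> linarith) (by constructor <;> linarith) h0
    have := hmax δ'' (hsub (by constructor <;> linarith))
    linarith
  have sub2 : ∀ δ'' : ℝ, 0 < δ'' → δ'' ≤ δ → (∀ s ∈ Set.Ioo (-δ'') (0:ℝ), φ s < 0) → False := by
    intro δ'' h0 hle hneg
    have hsub : Set.Icc (-δ'') (0:ℝ) ⊆ Set.Icc (-δ) δ := by
      apply Set.Icc_subset_Icc <;> linarith
    have hmono : StrictAntiOn h (Set.Icc (-δ'') (0:ℝ)) := by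
      apply strictAntiOn_of_deriv_neg (convex_Icc _ _) (hcont.mono hsub)
      intro s hs
      rw [interior_Icc] at hs
      have hd : HasDerivAt h (φ s) s := hderiv s (ne_of_lt hs.2) (by
        rw [abs_of_neg hs.2]; linarith [hs.1])
      rw [hd.deriv]; exact hneg s hs
    have : h 0 < h (-δ'') := hmono (by constructor <;> linarith) (by constructor <;> linarith) (by linarith)
    have := hmax (-δ'') (hsub (by constructor <;> linarith))
    linarith
  -- φ 0 = 0
  have hc0 : φ 0 = 0 := by
    by_contra hc
    rcases lt_or_gt_of_ne hc with hneg | hpos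
    · -- φ 0 < 0 : φ < 0 near 0 on the left
      have hcont0 : ContinuousAt φ 0 := hφ.continuousAt
      have hev : ∀ᶠ s in 𝓝 (0:ℝ), φ s < 0 := hcont0.eventually (eventually_lt_nhds hneg)
      rcases Metric.eventually_nhds_iff.1 hev with ⟨ε, hε, hball⟩
      refine sub2 (min (ε/2) δ) (by positivity) (min_le_right _ _) ?_
      intro s hs
      apply hball
      rw [Real.dist_eq, sub_zero, abs_of_neg hs.2]
      have := hs.1
      have h1 : min (ε/2) δ ≤ ε/2 := min_le_left _ _
      linarith
    · have hcont0 : ContinuousAt φ 0 := hφ.continuousAt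
      have hev : ∀ᶠ s in 𝓝 (0:ℝ), 0 < φ s := hcont0.eventually (eventually_gt_nhds hpos)
      rcases Metric.eventually_nhds_iff.1 hev with ⟨ε, hε, hball⟩
      refine sub1 (min (ε/2) δ) (by positivity) (min_le_right _ _) ?_
      intro s hs
      apply hball
      rw [Real.dist_eq, sub_zero, abs_of_pos hs.1]
      have := hs.2
      have h1 : min (ε/2) δ ≤ ε/2 := min_le_left _ _
      linarith
  -- now A ≤ 0
  by_contra hA
  push_neg at hA
  have hslope : Tendsto (slope φ 0) (𝓝[≠] (0:ℝ)) (𝓝 A) :=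
    hasDerivAt_iff_tendsto_slope.1 hφ
  have hev : ∀ᶠ s in 𝓝[≠] (0:ℝ), A/2 < slope φ 0 s :=
    hslope.eventually (eventually_gt_nhds (by linarith))
  rcases Metric.mem_nhdsWithin_iff.1 hev with ⟨ε, hε, hball⟩
  refine sub1 (min (ε/2) δ) (by positivity) (min_le_right _ _) ?_
  intro s hs
  have hsne : s ≠ 0 := ne_of_gt hs.1
  have hd : dist s 0 < ε := by
    rw [Real.dist_eq, sub_zero, abs_of_pos hs.1]
    have := hs.2; have h1 : min (ε/2) δ ≤ ε/2 := min_le_left _ _; linarith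
  have h2 : A/2 < slope φ 0 s := hball ⟨by rwa [Metric.mem_ball], hsne⟩
  rw [slope_def_field, hc0, sub_zero, sub_zero] at h2
  have h3 : 0 < φ s / s := lt_trans (by linarith) h2
  rcases div_pos_iff.1 h3 with ⟨h4, _⟩ | ⟨_, h5⟩
  · exact h4
  · linarith [hs.1]

lemma norm_line (x : E2) (i : Fin 2) (s : ℝ) :
    ‖x + s • EuclideanSpace.single i (1:ℝ)‖^2 = ‖x‖^2 + 2*(x i)*s + s^2 := by
  rw [norm_add_sq_real, real_inner_smul_right]
  have h1 : (inner ℝ x (EuclideanSpace.single i (1:ℝ)) : ℝ) = x i := by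
    rw [EuclideanSpace.inner_single_right]; simp
  rw [h1, norm_smul]
  simp [EuclideanSpace.norm_single]
  ring

lemma uLN_line (x : E2) (i : Fin 2) {s : ℝ} (h : 0 < 1 - ‖x‖^2 - 2*(x i)*s - s^2) :
    uLN (x + s • EuclideanSpace.single i (1:ℝ)) =
      Real.log 2 - Real.log (1 - ‖x‖^2 - 2*(x i)*s - s^2) := by
  rw [uLN, norm_line]
  rw [show 1 - (‖x‖^2 + 2*(x i)*s + s^2) = 1 - ‖x‖^2 - 2*(x i)*s - s^2 by ring]
  rw [Real.log_div two_ne_zero (ne_of_gt h)]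

lemma uLN_sq (x : E2) : ‖x‖^2 = (x 0)^2 + (x 1)^2 := by
  have := EuclideanSpace.norm_eq x
  rw [this, Real.sq_sqrt (by positivity)]
  rw [Fin.sum_univ_two]
  simp [sq_abs]

lemma hasDerivAt_P (x : E2) (i : Fin 2) (s : ℝ) :
    HasDerivAt (fun s : ℝ => 1 - ‖x‖^2 - 2*(x i)*s - s^2) (-(2*(x i)) - 2*s) s := by
  have h1 : HasDerivAt (fun s : ℝ => 1 - ‖x‖^2 - 2*(x i)*s - s^2)
      (0 - 2*(x i)*1 - 2*s^1) s := by
    exact (((hasDerivAt_const s (1 - ‖x‖^2))).sub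
      ((hasDerivAt_id s).const_mul (2*(x i)))).sub (hasDerivAt_pow 2 s)
  simpa using h1


lemma lapBound {w : E2 → ℝ} {x : E2} {ρ : ℝ} (hx : ‖x‖ < 1) (hρ : 0 < ρ)
    (hw : ContinuousOn w (Metric.ball x ρ))
    (hmax : ∀ y ∈ Metric.ball x ρ, w y - uLN y ≤ w x - uLN x) :
    lap w x ≤ Real.exp (2 * uLN x) := by
  have hc : 0 < 1 - ‖x‖^2 := by
    have h1 : ‖x‖^2 < 1 := by
      have := norm_nonneg x
      nlinarith
    linarith
  -- per-coordinate bound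
  have key : ∀ i : Fin 2,
      fderiv ℝ (fun y => fderiv ℝ w y (EuclideanSpace.single i 1)) x
        (EuclideanSpace.single i 1)
      ≤ (2*(1 - ‖x‖^2) + 4*(x i)^2)/(1 - ‖x‖^2)^2 := by
    intro i
    set v : E2 := EuclideanSpace.single i (1:ℝ) with hv
    set Fi : E2 → ℝ := fun y => fderiv ℝ w y v with hFi
    set b : ℝ := x i with hb
    have hd_pos : 0 < (2*(1 - ‖x‖^2) + 4*b^2)/(1 - ‖x‖^2)^2 := by positivity
    by_cases hF : DifferentiableAt ℝ Fi x
    · -- the line through x in direction v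
      set L : ℝ → E2 := fun s => x + s • v with hLdef
      have hL : ∀ s : ℝ, HasDerivAt L v s := by
        intro s
        have h1 : HasDerivAt (fun s : ℝ => s • v) ((1:ℝ) • v) s :=
          (hasDerivAt_id s).smul_const v
        have h2 := h1.const_add x
        rw [one_smul] at h2
        exact h2
      have hL0 : L 0 = x := by simp [hLdef]
      have hG : HasDerivAt (fun s => Fi (L s)) (fderiv ℝ Fi x v) 0 := by
        have h1 : HasFDerivAt Fi (fderiv ℝ Fi x) (L 0) := hL0 ▸ hF.hasFDerivAt
        exact h1.comp_hasDerivAt 0 (hL 0)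
      by_cases hacc : ∀ᶠ s in 𝓝[≠] (0:ℝ), DifferentiableAt ℝ w (L s)
      · -- main case: w differentiable along the punctured line near x
        rcases Metric.mem_nhdsWithin_iff.1 hacc with ⟨δ1, hδ1, hdiff⟩
        -- positivity of the polynomial near 0
        have hPc : ContinuousAt (fun s : ℝ => 1 - ‖x‖^2 - 2*b*s - s^2) 0 := by fun_prop
        have hP0 : (fun s : ℝ => 1 - ‖x‖^2 - 2*b*s - s^2) 0 = 1 - ‖x‖^2 := by norm_num
        have hPev : ∀ᶠ s in 𝓝 (0:ℝ), 0 < 1 - ‖x‖^2 - 2*b*s - s^2 := by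
          have := hPc.eventually (eventually_gt_nhds (hP0 ▸ hc))
          simpa using this
        rcases Metric.eventually_nhds_iff.1 hPev with ⟨δ2, hδ2, hP2⟩
        set δ : ℝ := min (min (δ1/2) (δ2/2)) (ρ/2) with hδdef
        have hδ : 0 < δ := by positivity
        have hδρ : δ < ρ := by
          have := min_le_right (min (δ1/2) (δ2/2)) (ρ/2); linarith
        have hδ1' : δ < δ1 := by
          have h1 := min_le_left (min (δ1/2) (δ2/2)) (ρ/2)
          have h2 := min_le_left (δ1/2) (δ2/2); linarith
        have hδ2' : δ < δ2 := by
          have h1 := min_le_left (min (δ1/2) (δ2/2)) (ρ/2)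
          have h2 := min_le_right (δ1/2) (δ2/2); linarith
        have hmem : ∀ s : ℝ, |s| ≤ δ → L s ∈ Metric.ball x ρ := by
          intro s hs
          rw [Metric.mem_ball, dist_eq_norm]
          have h1 : L s - x = s • v := by simp [hLdef]
          rw [h1, norm_smul, hv, EuclideanSpace.norm_single]
          simp only [norm_one, mul_one]
          exact lt_of_le_of_lt hs hδρ
        have hP : ∀ s : ℝ, |s| ≤ δ → 0 < 1 - ‖x‖^2 - 2*b*s - s^2 := by
          intro s hs
          apply hP2
          rw [Real.dist_eq, sub_zero]
          exact lt_of_le_of_lt hs hδ2'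
        set h : ℝ → ℝ := fun s => w (L s) -
          (Real.log 2 - Real.log (1 - ‖x‖^2 - 2*b*s - s^2)) with hhdef
        set φ : ℝ → ℝ := fun s => fderiv ℝ w (L s) v -
          (2*b + 2*s)/(1 - ‖x‖^2 - 2*b*s - s^2) with hφdef
        have hIccabs : ∀ s : ℝ, s ∈ Set.Icc (-δ) δ → |s| ≤ δ := fun s hs =>
          abs_le.2 ⟨hs.1, hs.2⟩
        have hcont : ContinuousOn h (Set.Icc (-δ) δ) := by
          apply ContinuousOn.sub
          · apply hw.comp
            · exact (Continuous.continuousOn (by fun_prop))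
            · intro s hs; exact hmem s (hIccabs s hs)
          · intro s hs
            apply ContinuousAt.continuousWithinAt
            apply ContinuousAt.sub continuousAt_const
            exact ContinuousAt.log (by fun_prop) (ne_of_gt (hP s (hIccabs s hs)))
        have hmax' : ∀ s ∈ Set.Icc (-δ) δ, h s ≤ h 0 := by
          intro s hs
          have h1 : h s = w (L s) - uLN (L s) := by
            rw [hhdef]
            simp only
            rw [uLN_line x i (hP s (hIccabs s hs))]
          have h2 : h 0 = w x - uLN x := by
            rw [hhdef]
            simp only
            have h3 := uLN_line x i (s := 0) (by simpa using hc)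
            simp only [zero_smul, add_zero] at h3
            rw [show (1 - ‖x‖^2 - 2*b*0 - 0^2 : ℝ) = 1 - ‖x‖^2 by ring, h3, hL0]
            ring_nf
          rw [h1, h2]
          exact hmax (L s) (hmem s (hIccabs s hs))
        have hderiv : ∀ s : ℝ, s ≠ 0 → |s| < δ → HasDerivAt h (φ s) s := by
          intro s hs0 hsδ
          have hdw : DifferentiableAt ℝ w (L s) := by
            apply hdiff
            constructor
            · rw [Metric.mem_ball, Real.dist_eq, sub_zero]
              exact lt_trans hsδ hδ1'
            · exact hs0
          have h1 : HasDerivAt (fun s => w (L s)) (fderiv ℝ w (L s) v) s :=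
            hdw.hasFDerivAt.comp_hasDerivAt s (hL s)
          have hPs := hP s (le_of_lt hsδ)
          have h2 : HasDerivAt (fun s => Real.log (1 - ‖x‖^2 - 2*b*s - s^2))
              ((1 - ‖x‖^2 - 2*b*s - s^2)⁻¹ * (-(2*b) - 2*s)) s :=
            by have := (Real.hasDerivAt_log (ne_of_gt hPs)).comp s (hasDerivAt_P x i s); exact this
          have h3 : HasDerivAt (fun s => Real.log 2 -
              Real.log (1 - ‖x‖^2 - 2*b*s - s^2))
              (-( (1 - ‖x‖^2 - 2*b*s - s^2)⁻¹ * (-(2*b) - 2*s))) s := by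
            have := (hasDerivAt_const s (Real.log 2)).sub h2
            rw [zero_sub] at this
            exact this
          have h4 := h1.sub h3
          have h5 : fderiv ℝ w (L s) v - -((1 - ‖x‖^2 - 2*b*s - s^2)⁻¹ * (-(2*b) - 2*s))
              = φ s := by
            rw [hφdef]
            field_simp
            ring
          rw [h5] at h4
          exact h4
        have hφd : HasDerivAt φ (fderiv ℝ Fi x v -
            (2*(1 - ‖x‖^2) + 4*b^2)/(1 - ‖x‖^2)^2) 0 := by
          have hnum : HasDerivAt (fun s : ℝ => 2*b + 2*s) 2 0 := by
            have := ((hasDerivAt_id (0:ℝ)).const_mul 2).const_add (2*b)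
            simpa using this
          have hden := hasDerivAt_P x i 0
          have hdiv := hnum.div hden (by simpa using (ne_of_gt hc))
          have hval : (2 * (1 - ‖x‖^2 - 2*b*0 - 0^2) - (2*b + 2*0) * (-(2*b) - 2*0)) /
              (1 - ‖x‖^2 - 2*b*0 - 0^2)^2 = (2*(1 - ‖x‖^2) + 4*b^2)/(1 - ‖x‖^2)^2 := by
            ring_nf
          rw [hval] at hdiv
          exact hG.sub hdiv
        have := oneD hδ hcont hmax' hderiv hφd
        linarith
      · -- w is non-differentiable at points accumulating along the line: junk is 0
        have hfreq : ∃ᶠ s in 𝓝[≠] (0:ℝ), Fi (L s) = 0 := by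
          apply (Filter.not_eventually.1 hacc).mono
          intro s hs
          rw [hFi]
          simp only
          rw [fderiv_zero_of_not_differentiableAt hs]
          simp
        have hG0 : Fi (L 0) = 0 := by
          by_contra hne
          have hev : ∀ᶠ s in 𝓝[≠] (0:ℝ), Fi (L s) ≠ 0 := by
            have h1 : ContinuousAt (fun s => Fi (L s)) 0 := hG.continuousAt
            exact (h1.eventually_ne hne).filter_mono nhdsWithin_le_nhds
          rcases (hev.and_frequently hfreq).exists with ⟨s, h1, h2⟩
          exact h1 h2
        have hT : fderiv ℝ Fi x v = 0 := by
          by_contra hne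
          have hslope : Tendsto (slope (fun s => Fi (L s)) 0) (𝓝[≠] (0:ℝ))
              (𝓝 (fderiv ℝ Fi x v)) := hasDerivAt_iff_tendsto_slope.1 hG
          have hev : ∀ᶠ s in 𝓝[≠] (0:ℝ), slope (fun s => Fi (L s)) 0 s ≠ 0 :=
            hslope.eventually (eventually_ne_nhds hne)
          have hfreq2 : ∃ᶠ s in 𝓝[≠] (0:ℝ), slope (fun s => Fi (L s)) 0 s = 0 := by
            apply hfreq.mp
            filter_upwards [self_mem_nhdsWithin] with s hs h1
            rw [slope_def_field, h1, hG0]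
            simp
          rcases (hev.and_frequently hfreq2).exists with ⟨s, h1, h2⟩
          exact h1 h2
        rw [hT]
        linarith
    · rw [fderiv_zero_of_not_differentiableAt hF]
      simp only [ContinuousLinearMap.zero_apply]
      linarith
  -- sum the two coordinates
  have hexp : Real.exp (2 * uLN x) = 4/(1 - ‖x‖^2)^2 := by
    rw [uLN, show (2:ℝ) * Real.log (2 / (1 - ‖x‖^2)) =
      Real.log ((2 / (1 - ‖x‖^2))^2) by rw [Real.log_pow]; push_cast; ring]
    rw [Real.exp_log (by positivity), div_pow]
    norm_num
  rw [lap, Fin.sum_univ_two, hexp]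
  have k0 := key 0
  have k1 := key 1
  have hsq := uLN_sq x
  have hceq : (2*(1 - ‖x‖^2) + 4*(x 0)^2)/(1 - ‖x‖^2)^2 +
      (2*(1 - ‖x‖^2) + 4*(x 1)^2)/(1 - ‖x‖^2)^2 = 4/(1 - ‖x‖^2)^2 := by
    rw [← add_div]
    congr 1
    nlinarith [hsq]
  linarith

noncomputable def vb (C t : ℝ) : ℝ := (1/2) * Real.log (1 + C * Real.exp (-2*t))

lemma vb_arg_pos {C : ℝ} (hC : 0 ≤ C) (t : ℝ) : 0 < 1 + C * Real.exp (-2*t) := by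
  have := Real.exp_pos (-2*t); nlinarith

lemma vb_arg_ge_one {C : ℝ} (hC : 0 ≤ C) (t : ℝ) : 1 ≤ 1 + C * Real.exp (-2*t) := by
  have := Real.exp_pos (-2*t); nlinarith

lemma vb_nonneg {C : ℝ} (hC : 0 ≤ C) (t : ℝ) : 0 ≤ vb C t := by
  have := Real.log_nonneg (vb_arg_ge_one hC t)
  rw [vb]; linarith

lemma vb_hasDeriv {C : ℝ} (hC : 0 ≤ C) (t : ℝ) :
    HasDerivAt (vb C) (Real.exp (-2 * vb C t) - 1) t := by
  have hg : HasDerivAt (fun t : ℝ => 1 + C * Real.exp (-2*t))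
      (C * (Real.exp (-2*t) * (-2))) t := by
    have h1 : HasDerivAt (fun t : ℝ => -2*t) (-2) t := by
      simpa using (hasDerivAt_id t).const_mul (-2:ℝ)
    have h2 : HasDerivAt (fun t : ℝ => Real.exp (-2*t)) (Real.exp (-2*t) * (-2)) t :=
      (Real.hasDerivAt_exp (-2*t)).comp t h1
    simpa using (h2.const_mul C).const_add 1
  have hpos := vb_arg_pos hC t
  have hlog : HasDerivAt (fun t : ℝ => Real.log (1 + C * Real.exp (-2*t)))
      ((1 + C * Real.exp (-2*t))⁻¹ * (C * (Real.exp (-2*t) * (-2)))) t :=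
    by have := (Real.hasDerivAt_log (ne_of_gt hpos)).comp t hg; exact this
  have h3 := hlog.const_mul (1/2 : ℝ)
  have hval : (1/2 : ℝ) * ((1 + C * Real.exp (-2*t))⁻¹ * (C * (Real.exp (-2*t) * (-2))))
      = Real.exp (-2 * vb C t) - 1 := by
    have hexp : Real.exp (-2 * vb C t) = (1 + C * Real.exp (-2*t))⁻¹ := by
      rw [vb, show -2 * ((1/2) * Real.log (1 + C * Real.exp (-2*t)))
        = -Real.log (1 + C * Real.exp (-2*t)) by ring, Real.exp_neg,
        Real.exp_log hpos]
    rw [hexp]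
    field_simp
    ring
  rw [hval] at h3
  exact h3

lemma vb_zero (M₀ : ℝ) : vb (Real.exp (2*M₀) - 1) 0 = M₀ := by
  rw [vb]
  norm_num
  ring

lemma vb_mono {C : ℝ} (hC : 0 ≤ C) {t : ℝ} (ht : 0 ≤ t) : vb C t ≤ vb C 0 := by
  rw [vb, vb]
  have h1 : Real.exp (-2*t) ≤ Real.exp (-2*0) := by
    apply Real.exp_le_exp.2; linarith
  have h2 : 1 + C * Real.exp (-2*t) ≤ 1 + C * Real.exp (-2*0) := by nlinarith
  exact mul_le_mul_of_nonneg_left (Real.log_le_log (vb_arg_pos hC t) h2)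
    (by norm_num : (0:ℝ) ≤ 1/2)

lemma uLN_nonneg {y : E2} (hy : ‖y‖ < 1) : 0 ≤ uLN y := by
  have h2 : 0 < 1 - ‖y‖^2 := by nlinarith [norm_nonneg y]
  apply Real.log_nonneg
  rw [le_div_iff₀ h2]; nlinarith

lemma uLN_contAt {y : E2} (hy : ‖y‖ < 1) : ContinuousAt uLN y := by
  have h2 : 0 < 1 - ‖y‖^2 := by nlinarith [norm_nonneg y]
  have h3 : ContinuousAt (fun z : E2 => 2 / (1 - ‖z‖^2)) y := by
    exact continuousAt_const.div (by fun_prop) (ne_of_gt h2)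
  exact ContinuousAt.log h3 (by positivity)

lemma mainComp (T : EReal) (u : E2 → ℝ → ℝ)
    (huc : ContinuousOn (fun p : E2 × ℝ => u p.1 p.2)
      (Metric.closedBall (0:E2) 1 ×ˢ Itv T))
    (hpde : ∀ x ∈ Metric.ball (0:E2) 1, ∀ t ∈ Itv T,
      deriv (u x) t = Real.exp (-2 * u x t) * lap (fun y => u y t) x - 1)
    {M₀ : ℝ} (hM₀0 : 0 ≤ M₀)
    (hM₀ : ∀ y ∈ Metric.ball (0:E2) 1, u y 0 - uLN y ≤ M₀) :
    ∀ t₀ ∈ Itv T, ∀ x₁ ∈ Metric.ball (0:E2) 1,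
      u x₁ t₀ - uLN x₁ ≤ vb (Real.exp (2*M₀) - 1) t₀ := by
  set C : ℝ := Real.exp (2*M₀) - 1 with hCdef
  have hC : 0 ≤ C := by
    have : (1:ℝ) ≤ Real.exp (2*M₀) := Real.one_le_exp (by linarith)
    simp [hCdef]; linarith
  intro t₀ ht₀ x₁ hx₁
  by_contra hcon
  push_neg at hcon
  rw [Metric.mem_ball, dist_zero_right] at hx₁
  have hIcc : Set.Icc (0:ℝ) t₀ ⊆ Itv T := by
    intro t ht
    exact ⟨ht.1, lt_of_le_of_lt (EReal.coe_le_coe_iff.2 ht.2) ht₀.2⟩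
  -- bound u on the compact cylinder
  have hKcomp : IsCompact ((Metric.closedBall (0:E2) 1) ×ˢ (Set.Icc (0:ℝ) t₀)) :=
    (isCompact_closedBall _ _).prod isCompact_Icc
  have hKcont : ContinuousOn (fun p : E2 × ℝ => u p.1 p.2)
      ((Metric.closedBall (0:E2) 1) ×ˢ (Set.Icc (0:ℝ) t₀)) :=
    huc.mono (Set.prod_mono_right hIcc)
  obtain ⟨Mu, hMu⟩ := (hKcomp.image_of_continuousOn hKcont).bddAbove
  have hMu' : ∀ z ∈ Metric.closedBall (0:E2) 1, ∀ t ∈ Set.Icc (0:ℝ) t₀,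
      u z t ≤ Mu := by
    intro z hz t ht
    exact hMu (Set.mem_image_of_mem _ (Set.mk_mem_prod hz ht))
  -- the radius r
  set r : ℝ := max ‖x₁‖ (Real.sqrt (max 0 (1 - 2*Real.exp (-Mu)))) with hrdef
  have hr0 : 0 ≤ r := le_trans (norm_nonneg x₁) (le_max_left _ _)
  have hr1 : r < 1 := by
    apply max_lt hx₁
    have h1 : Real.sqrt (max 0 (1 - 2*Real.exp (-Mu))) < Real.sqrt 1 := by
      apply Real.sqrt_lt_sqrt (le_max_left _ _)
      apply max_lt one_pos
      have := Real.exp_pos (-Mu); linarith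
    rwa [Real.sqrt_one] at h1
  have hout : ∀ z : E2, ‖z‖ < 1 → r ≤ ‖z‖ → Mu ≤ uLN z := by
    intro z hz1 hzr
    have hs : Real.sqrt (max 0 (1 - 2*Real.exp (-Mu))) ≤ ‖z‖ :=
      le_trans (le_max_right _ _) hzr
    have h1 : 1 - 2*Real.exp (-Mu) ≤ ‖z‖^2 := by
      have h2 : max 0 (1 - 2*Real.exp (-Mu)) ≤ ‖z‖^2 := by
        rw [show max 0 (1 - 2*Real.exp (-Mu)) =
          Real.sqrt (max 0 (1 - 2*Real.exp (-Mu)))^2 by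
            rw [Real.sq_sqrt (le_max_left _ _)]]
        exact pow_le_pow_left₀ (Real.sqrt_nonneg _) hs 2
      exact le_trans (le_max_right _ _) h2
    have h2 : 0 < 1 - ‖z‖^2 := by nlinarith [norm_nonneg z]
    have h3 : Real.exp Mu ≤ 2 / (1 - ‖z‖^2) := by
      rw [le_div_iff₀ h2]
      have h4 := Real.exp_pos Mu
      have h5 : Real.exp Mu * Real.exp (-Mu) = 1 := by
        rw [← Real.exp_add]; simp
      nlinarith
    rw [uLN]
    exact (Real.le_log_iff_exp_le (by positivity)).2 h3
  -- maximize S on the compact set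
  set S : E2 × ℝ → ℝ := fun p => u p.1 p.2 - uLN p.1 - vb C p.2 with hSdef
  set Kr : Set (E2 × ℝ) := (Metric.closedBall (0:E2) r) ×ˢ (Set.Icc (0:ℝ) t₀)
    with hKrdef
  have hKr : IsCompact Kr := (isCompact_closedBall _ _).prod isCompact_Icc
  have hmem₁ : (x₁, t₀) ∈ Kr := by
    constructor
    · rw [Metric.mem_closedBall, dist_zero_right]; exact le_max_left _ _
    · exact ⟨ht₀.1, le_refl _⟩
  have hKrsub : Kr ⊆ (Metric.closedBall (0:E2) 1) ×ˢ (Set.Icc (0:ℝ) t₀) :=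
    Set.prod_mono_left (Metric.closedBall_subset_closedBall hr1.le)
  have hScont : ContinuousOn S Kr := by
    apply ContinuousOn.sub
    apply ContinuousOn.sub
    · exact hKcont.mono hKrsub
    · intro p hp
      apply ContinuousAt.continuousWithinAt
      have hp1 : ‖p.1‖ < 1 := by
        have := hp.1
        rw [Metric.mem_closedBall, dist_zero_right] at this
        linarith
      exact (uLN_contAt hp1).comp (continuousAt_fst)
    · intro p hp
      apply ContinuousAt.continuousWithinAt
      have : ContinuousAt (vb C) p.2 := (vb_hasDeriv hC p.2).continuousAt
      exact this.comp continuousAt_snd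
  obtain ⟨⟨xs, ts⟩, hmemK, hmaxK⟩ := hKr.exists_isMaxOn ⟨(x₁, t₀), hmem₁⟩ hScont
  have hxsr' : ‖xs‖ ≤ r := by
    have := hmemK.1
    rwa [Metric.mem_closedBall, dist_zero_right] at this
  have hxs1 : ‖xs‖ < 1 := lt_of_le_of_lt hxsr' hr1
  have htsIcc : ts ∈ Set.Icc (0:ℝ) t₀ := hmemK.2
  have hSpos : 0 < S (xs, ts) := by
    have h1 : 0 < S (x₁, t₀) := by
      simp only [hSdef]
      linarith
    exact lt_of_lt_of_le h1 (hmaxK hmem₁)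
  have hxsr : ‖xs‖ < r := by
    rcases lt_or_ge ‖xs‖ r with h | h
    · exact h
    · exfalso
      have h1 := hout xs hxs1 h
      have h2 := hMu' xs (by rw [Metric.mem_closedBall, dist_zero_right]; linarith)
        ts htsIcc
      have h3 := vb_nonneg hC ts
      have : S (xs, ts) ≤ 0 := by simp only [hSdef]; linarith
      linarith
  have hts0 : 0 < ts := by
    rcases lt_or_ge 0 ts with h | h
    · exact h
    · exfalso
      have hts : ts = 0 := le_antisymm h htsIcc.1
      have h1 := hM₀ xs (by rw [Metric.mem_ball, dist_zero_right]; exact hxs1)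
      have h2 : S (xs, ts) ≤ 0 := by
        simp only [hSdef, hts]
        rw [hCdef, vb_zero]
        linarith
      linarith
  -- spatial maximum principle
  set ρ : ℝ := r - ‖xs‖ with hρdef
  have hρ : 0 < ρ := by simp [hρdef]; linarith
  have hballr : Metric.ball xs ρ ⊆ Metric.closedBall (0:E2) r := by
    intro y hy
    rw [Metric.mem_ball] at hy
    rw [Metric.mem_closedBall, dist_zero_right]
    have e1 : y - xs + xs = y := by abel
    have h1 : ‖y‖ ≤ ‖y - xs‖ + ‖xs‖ := by
      calc ‖y‖ = ‖y - xs + xs‖ := by rw [e1]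
      _ ≤ ‖y - xs‖ + ‖xs‖ := norm_add_le _ _
    have h2 : ‖y - xs‖ ≤ ρ := by rw [← dist_eq_norm]; exact hy.le
    have h3 : ρ = r - ‖xs‖ := hρdef
    linarith
  have hwcont : ContinuousOn (fun y => u y ts) (Metric.ball xs ρ) := by
    have hcl : Continuous (fun y : E2 => (y, ts)) := by fun_prop
    apply huc.comp hcl.continuousOn
    intro y hy
    constructor
    · exact Metric.closedBall_subset_closedBall hr1.le (hballr hy)
    · exact hIcc htsIcc
  have hwmax : ∀ y ∈ Metric.ball xs ρ, (fun y => u y ts) y - uLN y ≤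
      (fun y => u y ts) xs - uLN xs := by
    intro y hy
    have h1 : (y, ts) ∈ Kr := ⟨hballr hy, htsIcc⟩
    have h2 : S (y, ts) ≤ S (xs, ts) := hmaxK h1
    simp only [hSdef] at h2
    simp only []
    linarith
  have hlap := lapBound hxs1 hρ hwcont hwmax
  -- the PDE at the max point
  have hpde' := hpde xs (by rw [Metric.mem_ball, dist_zero_right]; exact hxs1)
    ts (hIcc htsIcc)
  have hA : Real.exp (-2 * u xs ts) * lap (fun y => u y ts) xs - 1 <
      Real.exp (-2 * vb C ts) - 1 := by
    have h1 : Real.exp (-2 * u xs ts) * lap (fun y => u y ts) xs ≤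
        Real.exp (-2 * u xs ts) * Real.exp (2 * uLN xs) :=
      mul_le_mul_of_nonneg_left hlap (Real.exp_pos _).le
    have h2 : Real.exp (-2 * u xs ts) * Real.exp (2 * uLN xs) =
        Real.exp (2 * uLN xs - 2 * u xs ts) := by
      rw [← Real.exp_add]; ring_nf
    have h3 : 2 * uLN xs - 2 * u xs ts < -2 * vb C ts := by
      have h4 : S (xs, ts) = u xs ts - uLN xs - vb C ts := rfl
      nlinarith [hSpos]
    have h5 := Real.exp_lt_exp.2 h3
    linarith
  by_cases hd : DifferentiableAt ℝ (u xs) ts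
  · -- time derivative at a (left) maximum is nonnegative
    have hg : HasDerivAt (fun t => u xs t - vb C t)
        (deriv (u xs) ts - (Real.exp (-2 * vb C ts) - 1)) ts :=
      hd.hasDerivAt.sub (vb_hasDeriv hC ts)
    have hgmax : ∀ t ∈ Set.Icc (0:ℝ) t₀, u xs t - vb C t ≤ u xs ts - vb C ts := by
      intro t ht
      have h1 : (xs, t) ∈ Kr := ⟨hmemK.1, ht⟩
      have h2 : S (xs, t) ≤ S (xs, ts) := hmaxK h1
      simp only [hSdef] at h2
      linarith
    have hslope := hasDerivAt_iff_tendsto_slope.1 hg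
    have hmono : 𝓝[<] ts ≤ 𝓝[≠] ts :=
      nhdsWithin_mono _ (fun t ht => ne_of_lt ht)
    have hslope' := hslope.mono_left hmono
    have hquot : ∀ᶠ t in 𝓝[<] ts, 0 ≤ slope (fun t => u xs t - vb C t) ts t := by
      filter_upwards [Ioo_mem_nhdsLT_of_mem (Set.mem_Ioc.2 ⟨hts0, le_refl ts⟩)]
        with t ht
      rw [slope_def_field]
      apply div_nonneg_iff.2
      right
      constructor
      · have := hgmax t ⟨ht.1.le, le_trans ht.2.le htsIcc.2⟩
        linarith
      · linarith [ht.2]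
    have hge := ge_of_tendsto hslope' hquot
    rw [hpde'] at hge
    linarith
  · have h0 : deriv (u xs) ts = 0 := deriv_zero_of_not_differentiableAt hd
    rw [h0] at hpde'
    have h1 : Real.exp (-2 * vb C ts) ≤ 1 := by
      apply Real.exp_le_one_iff.2
      have := vb_nonneg hC ts
      linarith
    linarith

theorem stmt_5 (T : EReal) (hT : 0 < T) (u : E2 → ℝ → ℝ)
    (huc : ContinuousOn (fun p : E2 × ℝ => u p.1 p.2) (Metric.closedBall (0:E2) 1 ×ˢ Itv T))
    (hut : ContinuousOn (fun p : E2 × ℝ => deriv (u p.1) p.2) (Metric.ball (0:E2) 1 ×ˢ Itv T))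
    (hu2 : ContinuousOn (fun p : E2 × ℝ =>
      fderiv ℝ (fun y => fderiv ℝ (fun z => u z p.2) y) p.1) (Metric.ball (0:E2) 1 ×ˢ Itv T))
    (hpde : ∀ x ∈ Metric.ball (0:E2) 1, ∀ t ∈ Itv T,
      deriv (u x) t = Real.exp (-2 * u x t) * lap (fun y => u y t) x - 1) :
    (∀ t ∈ Itv T, ∀ x ∈ Metric.ball (0:E2) 1,
      u x t - uLN x ≤ max (sSup ((fun y => u y 0 - uLN y) '' Metric.ball (0:E2) 1)) 0) ∧
    (T = ⊤ → ∀ ε > (0:ℝ), ∃ T' : ℝ, ∀ t ≥ T', ∀ x ∈ Metric.ball (0:E2) 1,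
      u x t - uLN x ≤ ε) := by
  have h0T : (0:ℝ) ∈ Itv T := ⟨le_refl 0, by simpa using hT⟩
  have hc0 : ContinuousOn (fun y : E2 => u y 0) (Metric.closedBall (0:E2) 1) := by
    have hcl : Continuous (fun y : E2 => (y, (0:ℝ))) := by fun_prop
    apply huc.comp hcl.continuousOn
    intro y hy
    exact ⟨hy, h0T⟩
  obtain ⟨B, hB⟩ := ((isCompact_closedBall (0:E2) 1).image_of_continuousOn hc0).bddAbove
  have hBdd : BddAbove ((fun y => u y 0 - uLN y) '' Metric.ball (0:E2) 1) := by
    refine ⟨B, ?_⟩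
    rintro z ⟨y, hy, rfl⟩
    rw [Metric.mem_ball, dist_zero_right] at hy
    have h1 : u y 0 ≤ B := hB (Set.mem_image_of_mem _
      (Metric.ball_subset_closedBall (by rw [Metric.mem_ball, dist_zero_right]; exact hy)))
    have h2 := uLN_nonneg hy
    simp only []
    linarith
  set M₀ : ℝ := max (sSup ((fun y => u y 0 - uLN y) '' Metric.ball (0:E2) 1)) 0 with hM₀def
  have hM₀0 : 0 ≤ M₀ := le_max_right _ _
  have hM₀ : ∀ y ∈ Metric.ball (0:E2) 1, u y 0 - uLN y ≤ M₀ := fun y hy =>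
    le_trans (le_csSup hBdd (Set.mem_image_of_mem _ hy)) (le_max_left _ _)
  have hC : 0 ≤ Real.exp (2*M₀) - 1 := by
    have : (1:ℝ) ≤ Real.exp (2*M₀) := Real.one_le_exp (by linarith)
    linarith
  have hcomp := mainComp T u huc hpde hM₀0 hM₀
  constructor
  · intro t ht x hx
    have h1 := hcomp t ht x hx
    have h2 : vb (Real.exp (2*M₀) - 1) t ≤ vb (Real.exp (2*M₀) - 1) 0 :=
      vb_mono hC ht.1
    have h3 := vb_zero M₀
    linarith
  · intro hTtop ε hε
    have htend : Tendsto (fun t : ℝ => (Real.exp (2*M₀) - 1) * Real.exp (-2*t))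
        atTop (𝓝 0) := by
      have h1 : Tendsto (fun t : ℝ => (2:ℝ)*t) atTop atTop :=
        Tendsto.const_mul_atTop two_pos tendsto_id
      have h2 : Tendsto (fun t : ℝ => Real.exp (-(2*t))) atTop (𝓝 0) :=
        Real.tendsto_exp_neg_atTop_nhds_zero.comp h1
      have h3 := h2.const_mul (Real.exp (2*M₀) - 1)
      simp only [mul_zero] at h3
      have h4 : (fun t : ℝ => (Real.exp (2*M₀) - 1) * Real.exp (-(2*t))) =
          (fun t : ℝ => (Real.exp (2*M₀) - 1) * Real.exp (-2*t)) := by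
        funext t; rw [neg_mul]
      rwa [h4] at h3
    have hpos : (0:ℝ) < Real.exp (2*ε) - 1 := by
      have : (1:ℝ) < Real.exp (2*ε) := Real.one_lt_exp_iff.2 (by linarith)
      linarith
    have hev : ∀ᶠ t in atTop, (Real.exp (2*M₀) - 1) * Real.exp (-2*t) <
        Real.exp (2*ε) - 1 := htend.eventually (eventually_lt_nhds hpos)
    rcases eventually_atTop.1 hev with ⟨Tc, hTc⟩
    refine ⟨max Tc 0, ?_⟩
    intro t ht x hx
    have ht0 : (0:ℝ) ≤ t := le_trans (le_max_right _ _) ht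
    have htI : t ∈ Itv T := ⟨ht0, by rw [hTtop]; exact EReal.coe_lt_top t⟩
    have h1 := hcomp t htI x hx
    have h2 : vb (Real.exp (2*M₀) - 1) t ≤ ε := by
      have h3 : 1 + (Real.exp (2*M₀) - 1) * Real.exp (-2*t) ≤ Real.exp (2*ε) := by
        have := hTc t (le_trans (le_max_left _ _) ht); linarith
      have h4 := Real.log_le_log (vb_arg_pos hC t) h3
      rw [Real.log_exp] at h4
      rw [vb]; linarith
    linarith
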